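/- The exponential mechanism is ε-differentially private: for a score function q : X^n × Y → ℝ with sensitivity Δ = max over y ∈ Y and neighboring x,x' of |q(x,y) − q(x',y)|, the mechanism that on input x selects y ∈ Y with probability proportional to exp(ε·q(x,y)/(2Δ)) satisfies, for all neighboring x, x' and all y, Pr[output = y on x] ≤ e^ε · Pr[output = y on x']. -/
import Mathlib


open Finset

/-- Two datasets in `X^n` are neighboring if they differ in exactly one coordinate. -/
def Neighboring {X : Type*} {n : ℕ} (x x' : Fin n → X) : Prop :=
  ∃ i : Fin n, x i ≠ x' i ∧ ∀ j : Fin n, j ≠ i → x j = x' j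

/-- The exponential mechanism is `ε`-differentially private: if the score function `q`
has sensitivity at most `Δ > 0` (i.e. `|q(x,y) − q(x',y)| ≤ Δ` for all `y` and all
neighboring `x, x'`), then for all neighboring `x, x'` and every output `y`, the
probability of selecting `y` (proportional to `exp(ε·q(x,y)/(2Δ))`) on input `x` is at
most `e^ε` times the probability of selecting `y` on input `x'`. -/
theorem exponential_mechanism_private {X Y : Type*} [Fintype X] [Fintype Y] [Nonempty Y]
    {n : ℕ} (q : (Fin n → X) → Y → ℝ) (ε Δ : ℝ) (hε : 0 ≤ ε) (hΔ : 0 < Δ)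
    (hsens : ∀ (y : Y) (x x' : Fin n → X), Neighboring x x' → |q x y - q x' y| ≤ Δ) :
    ∀ x x' : Fin n → X, Neighboring x x' → ∀ y : Y,
      Real.exp (ε * q x y / (2 * Δ)) / (∑ y' : Y, Real.exp (ε * q x y' / (2 * Δ)))
        ≤ Real.exp ε *
          (Real.exp (ε * q x' y / (2 * Δ)) /
            (∑ y' : Y, Real.exp (ε * q x' y' / (2 * Δ)))) := by
  intro x x' hnb y
  have h2Δ : 0 < 2 * Δ := by linarith
  set A := ∑ y' : Y, Real.exp (ε * q x y' / (2 * Δ)) with hA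
  set B := ∑ y' : Y, Real.exp (ε * q x' y' / (2 * Δ)) with hB
  have hApos : 0 < A := Finset.sum_pos (fun _ _ => Real.exp_pos _) univ_nonempty
  have hBpos : 0 < B := Finset.sum_pos (fun _ _ => Real.exp_pos _) univ_nonempty
  -- pointwise ratio bounds
  have hratio : ∀ z : Y, Real.exp (ε * q x z / (2 * Δ)) ≤
      Real.exp (ε / 2) * Real.exp (ε * q x' z / (2 * Δ)) := by
    intro z
    rw [← Real.exp_add]
    apply Real.exp_le_exp.mpr
    have h1 : q x z - q x' z ≤ Δ := (abs_le.mp (hsens z x x' hnb)).2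
    have : ε * q x z / (2 * Δ) - ε * q x' z / (2 * Δ) ≤ ε / 2 := by
      rw [div_sub_div_same, ← mul_sub, div_le_div_iff₀ h2Δ (by norm_num : (0:ℝ) < 2)]
      have := mul_le_mul_of_nonneg_left h1 hε
      nlinarith
    linarith
  have hratio' : ∀ z : Y, Real.exp (ε * q x' z / (2 * Δ)) ≤
      Real.exp (ε / 2) * Real.exp (ε * q x z / (2 * Δ)) := by
    intro z
    rw [← Real.exp_add]
    apply Real.exp_le_exp.mpr
    have h1 : q x' z - q x z ≤ Δ := by
      have := (abs_le.mp (hsens z x x' hnb)).1; linarith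
    have : ε * q x' z / (2 * Δ) - ε * q x z / (2 * Δ) ≤ ε / 2 := by
      rw [div_sub_div_same, ← mul_sub, div_le_div_iff₀ h2Δ (by norm_num : (0:ℝ) < 2)]
      have := mul_le_mul_of_nonneg_left h1 hε
      nlinarith
    linarith
  have hBA : B ≤ Real.exp (ε / 2) * A := by
    rw [hA, hB, Finset.mul_sum]
    exact Finset.sum_le_sum fun z _ => hratio' z
  rw [div_le_iff₀ hApos, mul_comm (Real.exp ε), mul_assoc, div_mul_eq_mul_div,
    le_div_iff₀ hBpos]
  calc Real.exp (ε * q x y / (2 * Δ)) * B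
      ≤ (Real.exp (ε / 2) * Real.exp (ε * q x' y / (2 * Δ))) * (Real.exp (ε / 2) * A) :=
        mul_le_mul (hratio y) hBA hBpos.le (by positivity)
    _ = Real.exp (ε * q x' y / (2 * Δ)) * (Real.exp ε * A) := by
        rw [show ε = ε/2 + ε/2 by ring, Real.exp_add]; ring
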